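/- arXiv:2208.03989 — 2 statements merged into one kernel-verified Lean document; each statement's English description precedes it below -/
import Mathlib

section
/- Suppose l < i < u, l < j < u, u ≤ i + B, l ≥ i − D (both bounds reachable), and K ≤ 2(u − l). Then the number of integer grid bridges from i to j with B upward jumps that attain both the value l at some index and the value u at some index equals c_{lu} + c_{ul}, where c_{lu} = C(K, B − (u − l)) if B ≥ u − l and c_{lu} = 0 otherwise, and c_{ul} = C(K, B + (u − l)). -/
/-!
A path with unit steps is determined by its start and its set of up-steps, so the paths of
length `K` from `i` to `i + 2m - K` number `C(K, m)`. Since `l < i, j < u` and `K ≤ 2(u - l)`, a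
bridge visiting both `l` and `u` does so in only one order: visiting `l`, `u`, `l` in turn takes
at least `(i - l) + 2(u - l) + (j - l) > K` steps, and likewise for `u`, `l`, `u`. Bridges visiting
`u` and later `l` are counted by reflecting twice: after the first visit to `u` they become the
paths to `2u - j` visiting `2u - l`, and reflecting those after their first visit to `2u - l`
gives all paths to `j + 2(u - l)`. Symmetrically, bridges visiting `l` and later `u` correspond
to the paths to `j - 2(u - l)`.
-/

/-- An integer grid bridge from `i` to `j` with `B` upward jumps and `D` downward
jumps. -/
def IsBridge (i j : ℤ) (B D : ℕ) (ω : Fin (B + D + 1) → ℤ) : Prop :=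
  ω 0 = i ∧ ω (Fin.last (B + D)) = j ∧
    (∀ k : Fin (B + D), |ω k.succ - ω k.castSucc| = 1) ∧
    (Finset.univ.filter (fun k : Fin (B + D) => ω k.succ = ω k.castSucc + 1)).card = B

open Finset

theorem Fin.sum_succ_sub_castSucc {M : Type*} [AddCommGroup M] {n : ℕ} (f : Fin (n + 1) → M) :
    ∑ k : Fin n, (f k.succ - f k.castSucc) = f (Fin.last n) - f 0 := by
  induction n with
  | zero => simp
  | succ n ih =>
    rw [Fin.sum_univ_castSucc]
    have := ih (f ∘ Fin.castSucc)
    simp only [Function.comp_apply, Fin.castSucc_zero] at this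
    simp only [Fin.succ_castSucc, this, Fin.succ_last]
    abel

variable {K : ℕ}

def IsLatticePath (ω : Fin (K + 1) → ℤ) : Prop :=
  ∀ k : Fin K, |ω k.succ - ω k.castSucc| = 1

def latticePaths (K : ℕ) (i j : ℤ) : Set (Fin (K + 1) → ℤ) :=
  {ω | ω 0 = i ∧ ω (Fin.last K) = j ∧ IsLatticePath ω}

def upSteps (ω : Fin (K + 1) → ℤ) : Finset (Fin K) :=
  univ.filter fun k => ω k.succ = ω k.castSucc + 1

def ofUpSteps (i : ℤ) (t : Finset (Fin K)) : Fin (K + 1) → ℤ :=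
  Fin.induction i fun k v => v + if k ∈ t then 1 else -1

namespace IsLatticePath

variable {ω : Fin (K + 1) → ℤ} (hω : IsLatticePath ω)
include hω

theorem succ_eq_or (k : Fin K) :
    ω k.succ = ω k.castSucc + 1 ∨ ω k.succ = ω k.castSucc - 1 := by
  rcases (abs_eq zero_le_one).mp (hω k) with h | h
  · left; linarith
  · right; linarith

theorem succ_eq (k : Fin K) :
    ω k.succ = ω k.castSucc + if k ∈ upSteps ω then 1 else -1 := by
  simp only [upSteps, mem_filter, mem_univ, true_and]
  split_ifs with h
  · exact h
  · exact (hω.succ_eq_or k).resolve_left h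

theorem last_sub_zero : ω (Fin.last K) - ω 0 = 2 * #(upSteps ω) - K := by
  have hstep : ∀ k : Fin K,
      ω k.succ - ω k.castSucc = 2 * (if k ∈ upSteps ω then 1 else 0) - 1 := by
    intro k
    rw [hω.succ_eq k]
    split_ifs <;> ring
  rw [← Fin.sum_succ_sub_castSucc, sum_congr rfl fun k _ => hstep k, sum_sub_distrib,
    ← mul_sum, sum_boole, filter_mem_eq_inter, univ_inter]
  simp

theorem abs_sub_le {a b : Fin (K + 1)} (hab : a ≤ b) : |ω b - ω a| ≤ (b : ℤ) - a := by
  induction b using Fin.induction with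
  | zero => simp [Fin.le_zero_iff.mp hab]
  | succ k ih =>
    rcases hab.eq_or_lt with rfl | hlt
    · simp
    have := ih (Fin.le_castSucc_iff.mpr hlt)
    rw [abs_le] at this ⊢
    simp only [Fin.val_succ, Fin.val_castSucc] at this ⊢
    rcases hω.succ_eq_or k with h | h <;> push_cast <;> constructor <;> linarith

theorem exists_eq_of_mem_uIcc {b : Fin (K + 1)} {c : ℤ} (hc : c ∈ Set.uIcc (ω 0) (ω b)) :
    ∃ t ≤ b, ω t = c := by
  induction b using Fin.induction with
  | zero => exact ⟨0, le_rfl, by rwa [Set.uIcc_self, Set.mem_singleton_iff, eq_comm] at hc⟩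
  | succ k ih =>
    by_cases hk : c ∈ Set.uIcc (ω 0) (ω k.castSucc)
    · obtain ⟨t, htk, ht⟩ := ih hk
      exact ⟨t, htk.trans (Fin.castSucc_le_succ k), ht⟩
    · refine ⟨k.succ, le_rfl, ?_⟩
      rw [Set.mem_uIcc] at hc hk
      rcases hω.succ_eq_or k with h | h <;> omega

theorem eq_ofUpSteps : ω = ofUpSteps (ω 0) (upSteps ω) := by
  funext k
  induction k using Fin.induction with
  | zero => simp [ofUpSteps]
  | succ k ih => rw [hω.succ_eq, ih]; simp [ofUpSteps]

end IsLatticePath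

theorem ofUpSteps_zero (i : ℤ) (t : Finset (Fin K)) : ofUpSteps i t 0 = i := by
  simp [ofUpSteps]

theorem ofUpSteps_succ (i : ℤ) (t : Finset (Fin K)) (k : Fin K) :
    ofUpSteps i t k.succ = ofUpSteps i t k.castSucc + if k ∈ t then 1 else -1 := by
  simp [ofUpSteps]

theorem isLatticePath_ofUpSteps (i : ℤ) (t : Finset (Fin K)) :
    IsLatticePath (ofUpSteps i t) := by
  intro k
  rw [ofUpSteps_succ]
  split_ifs <;> simp

theorem upSteps_ofUpSteps (i : ℤ) (t : Finset (Fin K)) : upSteps (ofUpSteps i t) = t := by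
  ext k
  simp only [upSteps, mem_filter, mem_univ, true_and, ofUpSteps_succ]
  split_ifs with h <;> simp [h]

theorem latticePaths_finite (i j : ℤ) : (latticePaths K i j).Finite :=
  (Set.finite_range (ofUpSteps i)).subset fun ω ⟨h0, _, hω⟩ =>
    ⟨upSteps ω, by rw [← h0, ← hω.eq_ofUpSteps]⟩

theorem latticePaths_eq_empty {i j : ℤ} (h : j < i - K) : latticePaths K i j = ∅ := by
  refine Set.eq_empty_of_forall_notMem fun ω ⟨h0, hlast, hω⟩ => ?_
  have := hω.last_sub_zero
  omega

theorem ncard_latticePaths (i : ℤ) (m : ℕ) :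
    (latticePaths K i (i + 2 * m - K)).ncard = K.choose m := by
  have himage : latticePaths K i (i + 2 * m - K) = ofUpSteps i '' {t | #t = m} := by
    ext ω
    constructor
    · rintro ⟨h0, hlast, hω⟩
      refine ⟨upSteps ω, ?_, by rw [← h0, ← hω.eq_ofUpSteps]⟩
      have := hω.last_sub_zero
      simp only [Set.mem_ofPred_eq]
      omega
    · rintro ⟨t, rfl, rfl⟩
      have := (isLatticePath_ofUpSteps i t).last_sub_zero
      rw [upSteps_ofUpSteps, ofUpSteps_zero] at this
      exact ⟨ofUpSteps_zero i t, by omega, isLatticePath_ofUpSteps i t⟩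
  rw [himage, Set.ncard_image_of_injective _
    (Function.LeftInverse.injective (upSteps_ofUpSteps i))]
  have hslice : {t : Finset (Fin K) | #t = m} = ↑(powersetCard m (univ : Finset (Fin K))) := by
    ext t
    simp
  rw [hslice, Set.ncard_coe_finset, card_powersetCard, card_univ, Fintype.card_fin]

def reflectAfterHit (c : ℤ) (ω : Fin (K + 1) → ℤ) : Fin (K + 1) → ℤ :=
  fun k => if ∃ t ≤ k, ω t = c then 2 * c - ω k else ω k

section reflectAfterHit

variable {c : ℤ} {ω : Fin (K + 1) → ℤ}

theorem reflectAfterHit_of_le {t k : Fin (K + 1)} (ht : ω t = c) (htk : t ≤ k) :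
    reflectAfterHit c ω k = 2 * c - ω k :=
  if_pos ⟨t, htk, ht⟩

theorem reflectAfterHit_of_forall_ne {k : Fin (K + 1)} (h : ∀ t ≤ k, ω t ≠ c) :
    reflectAfterHit c ω k = ω k :=
  if_neg fun ⟨t, htk, ht⟩ => h t htk ht

theorem reflectAfterHit_eq_self_of_eq {t : Fin (K + 1)} (ht : ω t = c) :
    reflectAfterHit c ω t = c := by
  rw [reflectAfterHit_of_le ht le_rfl, ht]
  ring

theorem reflectAfterHit_zero : reflectAfterHit c ω 0 = ω 0 := by
  by_cases h : ω 0 = c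
  · rw [reflectAfterHit_eq_self_of_eq h, h]
  · exact reflectAfterHit_of_forall_ne fun t ht => Fin.le_zero_iff.mp ht ▸ h

theorem exists_reflectAfterHit_eq_iff {k : Fin (K + 1)} :
    (∃ t ≤ k, reflectAfterHit c ω t = c) ↔ ∃ t ≤ k, ω t = c := by
  refine ⟨fun ⟨t, htk, ht⟩ => ?_, fun ⟨t, htk, ht⟩ => ⟨t, htk, reflectAfterHit_eq_self_of_eq ht⟩⟩
  by_contra! h
  rw [reflectAfterHit_of_forall_ne fun s hs => h s (hs.trans htk)] at ht
  exact h t htk ht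

theorem reflectAfterHit_involutive (c : ℤ) :
    Function.Involutive (reflectAfterHit (K := K) c) := by
  intro ω
  funext k
  by_cases h : ∃ t ≤ k, ω t = c
  · obtain ⟨t, htk, ht⟩ := h
    rw [reflectAfterHit_of_le (reflectAfterHit_eq_self_of_eq ht) htk,
      reflectAfterHit_of_le ht htk]
    ring
  · have h' : ¬∃ t ≤ k, reflectAfterHit c ω t = c := exists_reflectAfterHit_eq_iff.not.mpr h
    push Not at h h'
    rw [reflectAfterHit_of_forall_ne h', reflectAfterHit_of_forall_ne h]

theorem IsLatticePath.reflectAfterHit (hω : IsLatticePath ω) :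
    IsLatticePath (reflectAfterHit c ω) := by
  intro k
  by_cases hk : ∃ t ≤ k.castSucc, ω t = c
  · obtain ⟨t, htk, ht⟩ := hk
    rw [reflectAfterHit_of_le ht htk, reflectAfterHit_of_le ht (htk.trans k.castSucc_le_succ),
      ← abs_neg, ← hω k]
    ring_nf
  push Not at hk
  rw [reflectAfterHit_of_forall_ne hk]
  by_cases hs : ω k.succ = c
  · rw [reflectAfterHit_eq_self_of_eq hs, ← hs, hω k]
  · refine (reflectAfterHit_of_forall_ne fun t ht => ?_).symm ▸ hω k
    rcases ht.eq_or_lt with rfl | hlt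
    · exact hs
    · exact hk t (Fin.le_castSucc_iff.mpr hlt)

theorem reflectAfterHit_mem_latticePaths {i j : ℤ} (hω : ω ∈ latticePaths K i j)
    {t : Fin (K + 1)} (ht : ω t = c) : reflectAfterHit c ω ∈ latticePaths K i (2 * c - j) :=
  ⟨reflectAfterHit_zero.trans hω.1, by rw [reflectAfterHit_of_le ht (Fin.le_last t), hω.2.1],
    hω.2.2.reflectAfterHit⟩

end reflectAfterHit

theorem ncard_eq_of_reflectAfterHit (c : ℤ) {S T : Set (Fin (K + 1) → ℤ)}
    (hST : Set.MapsTo (reflectAfterHit c) S T) (hTS : Set.MapsTo (reflectAfterHit c) T S) :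
    S.ncard = T.ncard :=
  (Set.InvOn.bijOn ⟨fun ω _ => reflectAfterHit_involutive c ω,
    fun ω _ => reflectAfterHit_involutive c ω⟩ hST hTS).ncard_eq

/-- The reflection principle. -/
theorem ncard_latticePaths_hitting {i j c : ℤ} (hc : c ∈ Set.uIcc i (2 * c - j)) :
    {ω ∈ latticePaths K i j | ∃ t, ω t = c}.ncard = (latticePaths K i (2 * c - j)).ncard := by
  refine ncard_eq_of_reflectAfterHit c
    (fun ω ⟨hω, t, ht⟩ => reflectAfterHit_mem_latticePaths hω ht) fun ω hω => ?_
  obtain ⟨t, -, ht⟩ := hω.2.2.exists_eq_of_mem_uIcc (b := Fin.last K) (by rwa [hω.1, hω.2.1])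
  have := reflectAfterHit_mem_latticePaths hω ht
  rw [sub_sub_cancel] at this
  exact ⟨this, t, reflectAfterHit_eq_self_of_eq ht⟩

def HitsThen {α β : Type*} [LE α] (ω : α → β) (a b : β) : Prop :=
  ∃ s t, s ≤ t ∧ ω s = a ∧ ω t = b

theorem exists_eq_and_exists_eq_iff_hitsThen {α β : Type*} [LinearOrder α] {ω : α → β}
    {a b : β} : ((∃ s, ω s = a) ∧ ∃ t, ω t = b) ↔ HitsThen ω a b ∨ HitsThen ω b a := by
  constructor
  · rintro ⟨⟨s, hs⟩, t, ht⟩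
    rcases le_total s t with hst | hts
    · exact Or.inl ⟨s, t, hst, hs, ht⟩
    · exact Or.inr ⟨t, s, hts, ht, hs⟩
  · rintro (⟨s, t, -, hs, ht⟩ | ⟨t, s, -, ht, hs⟩) <;> exact ⟨⟨s, hs⟩, t, ht⟩

-- Reflecting after the first visit to `a` sends the later visit to `b` to a visit to `2a - b`;
-- conversely a path to `2a - j` visiting `2a - b` must pass through `a` before.
theorem ncard_latticePaths_hitsThen_eq_hitting {i j a b : ℤ}
    (ha : a ∈ Set.uIcc i (2 * a - b)) :
    {ω ∈ latticePaths K i j | HitsThen ω a b}.ncard =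
      {ω ∈ latticePaths K i (2 * a - j) | ∃ t, ω t = 2 * a - b}.ncard := by
  refine ncard_eq_of_reflectAfterHit a (fun ω ⟨hω, s, t, hst, hs, ht⟩ => ?_)
    fun ω ⟨hω, t, ht⟩ => ?_
  · refine ⟨reflectAfterHit_mem_latticePaths hω hs, t, ?_⟩
    rw [reflectAfterHit_of_le hs hst, ht]
  · obtain ⟨s, hst, hs⟩ := hω.2.2.exists_eq_of_mem_uIcc (b := t) (by rwa [hω.1, ht])
    have := reflectAfterHit_mem_latticePaths hω hs
    rw [sub_sub_cancel] at this
    refine ⟨this, s, t, hst, reflectAfterHit_eq_self_of_eq hs, ?_⟩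
    rw [reflectAfterHit_of_le hs hst, ht, sub_sub_cancel]

theorem ncard_latticePaths_hitsThen {i j a b : ℤ} (ha : a ∈ Set.uIcc i (2 * a - b))
    (hb : 2 * a - b ∈ Set.uIcc i (j + 2 * (a - b))) :
    {ω ∈ latticePaths K i j | HitsThen ω a b}.ncard =
      (latticePaths K i (j + 2 * (a - b))).ncard := by
  have hend : 2 * (2 * a - b) - (2 * a - j) = j + 2 * (a - b) := by ring
  rw [ncard_latticePaths_hitsThen_eq_hitting ha, ncard_latticePaths_hitting (by rwa [hend]), hend]

-- Visiting `l`, `u` and `l` again (or `u`, `l`, `u`) in order takes more than `2 (u - l)` steps.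
theorem disjoint_hitsThen {i j l u : ℤ} (hli : l < i) (hiu : i < u) (hlj : l < j) (hju : j < u)
    (hK : (K : ℤ) ≤ 2 * (u - l)) :
    Disjoint {ω ∈ latticePaths K i j | HitsThen ω l u}
      {ω ∈ latticePaths K i j | HitsThen ω u l} := by
  rw [Set.disjoint_left]
  rintro ω ⟨⟨h0, hlast, hω⟩, s₁, t₁, hst₁, hs₁, ht₁⟩ ⟨-, s₂, t₂, hst₂, hs₂, ht₂⟩
  have hlip {a b : Fin (K + 1)} (hab : a ≤ b) := abs_le.mp (hω.abs_sub_le hab)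
  rcases le_total t₁ t₂ with h | h
  · have := hlip (Fin.zero_le s₁); have := hlip hst₁
    have := hlip h; have := hlip (Fin.le_last t₂)
    simp only [h0, hlast, hs₁, ht₁, ht₂, Fin.val_zero, Fin.val_last] at *
    omega
  · have := hlip (Fin.zero_le s₂); have := hlip hst₂
    have := hlip h; have := hlip (Fin.le_last t₁)
    simp only [h0, hlast, hs₂, ht₂, ht₁, Fin.val_zero, Fin.val_last] at *
    omega

theorem isBridge_iff_mem_latticePaths {i j : ℤ} {B D : ℕ} (hj : j = i + B - D)
    {ω : Fin (B + D + 1) → ℤ} : IsBridge i j B D ω ↔ ω ∈ latticePaths (B + D) i j := by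
  refine ⟨fun ⟨h0, hlast, hω, _⟩ => ⟨h0, hlast, hω⟩, fun ⟨h0, hlast, hω⟩ => ⟨h0, hlast, hω, ?_⟩⟩
  have := hω.last_sub_zero
  change #(upSteps ω) = B
  push_cast at this
  omega

theorem bridges_touching_both_bounds_count_general (i j l u : ℤ) (B D : ℕ)
    (hj : j = i + B - D) (hli : l < i) (hiu : i < u) (hlj : l < j) (hju : j < u)
    (hK : ((B + D : ℕ) : ℤ) ≤ 2 * (u - l)) :
    Set.ncard {ω : Fin (B + D + 1) → ℤ | IsBridge i j B D ω ∧
        (∃ k : Fin (B + D + 1), ω k = l) ∧ (∃ k : Fin (B + D + 1), ω k = u)}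
      = (if u - l ≤ (B : ℤ) then Nat.choose (B + D) (B - (u - l).toNat) else 0)
        + Nat.choose (B + D) (B + (u - l).toNat) := by
  have hsplit : {ω : Fin (B + D + 1) → ℤ | IsBridge i j B D ω ∧
        (∃ k : Fin (B + D + 1), ω k = l) ∧ (∃ k : Fin (B + D + 1), ω k = u)} =
      {ω ∈ latticePaths (B + D) i j | HitsThen ω l u} ∪
        {ω ∈ latticePaths (B + D) i j | HitsThen ω u l} := by
    ext ω
    simp only [isBridge_iff_mem_latticePaths hj, exists_eq_and_exists_eq_iff_hitsThen]
    exact and_or_left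
  have hfin := latticePaths_finite (K := B + D) i j
  rw [hsplit, Set.ncard_union_eq (disjoint_hitsThen hli hiu hlj hju hK)
      (hfin.subset (Set.sep_subset _ _)) (hfin.subset (Set.sep_subset _ _)),
    ncard_latticePaths_hitsThen (by rw [Set.mem_uIcc]; omega) (by rw [Set.mem_uIcc]; omega),
    ncard_latticePaths_hitsThen (by rw [Set.mem_uIcc]; omega) (by rw [Set.mem_uIcc]; omega)]
  congr 1
  · split_ifs with h
    · convert ncard_latticePaths (K := B + D) i (B - (u - l).toNat) using 3
      push_cast
      omega
    · rw [latticePaths_eq_empty (by push_cast; omega), Set.ncard_empty]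
  · convert ncard_latticePaths (K := B + D) i (B + (u - l).toNat) using 3
    push_cast
    omega

/-- With `l < i < u`, `l < j < u`, both bounds reachable (`u ≤ i + B`, `l ≥ i - D`)
and `K ≤ 2(u - l)`, the number of integer grid bridges from `i` to `j` with `B`
upward jumps attaining both the value `l` and the value `u` equals
`c_{lu} + c_{ul}`, where `c_{lu} = C(K, B - (u - l))` if `B ≥ u - l` (else `0`)
and `c_{ul} = C(K, B + (u - l))`. -/
theorem bridges_touching_both_bounds_count (i j l u : ℤ) (B D : ℕ)
    (hj : j = i + B - D) (hli : l < i) (hiu : i < u) (hlj : l < j) (hju : j < u)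
    (hur : u ≤ i + B) (hlr : i - D ≤ l) (hK : ((B + D : ℕ) : ℤ) ≤ 2 * (u - l)) :
    Set.ncard {ω : Fin (B + D + 1) → ℤ | IsBridge i j B D ω ∧
        (∃ k : Fin (B + D + 1), ω k = l) ∧ (∃ k : Fin (B + D + 1), ω k = u)}
      = (if u - l ≤ (B : ℤ) then Nat.choose (B + D) (B - (u - l).toNat) else 0)
        + Nat.choose (B + D) (B + (u - l).toNat) :=
  bridges_touching_both_bounds_count_general i j l u B D hj hli hiu hlj hju hK
end

section
/- (Theorem 1, case 4, exact form.) Suppose l < i < u, l < j < u, u ≤ i + B, l ≥ i − D (both bounds reachable), and K ≤ 2(u − l). Then, as an identity of integers, the cardinality of 𝕊_{ij}^B(l,u) equals C(K, B) − C(K, B_l) − C(K, B_u) + c_{lu} + c_{ul}, where B_l = B + l − j, B_u = B − j + u, c_{lu} = C(K, B − (u − l)) if B ≥ u − l and c_{lu} = 0 otherwise, and c_{ul} = C(K, B + (u − l)). -/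
/-- `𝕊_{ij}^B(l,u)`: bridges staying strictly between `l` and `u`. -/
def BoundedBridges (i j l u : ℤ) (B D : ℕ) : Set (Fin (B + D + 1) → ℤ) :=
  {ω | IsBridge i j B D ω ∧ ∀ k : Fin (B + D + 1), l < ω k ∧ ω k < u}

/-!
Encode a path with `K = B + D` steps by the set `S ⊆ range K` of its up-steps, so that bridges
with `B` up-steps are the `B`-subsets of `range K`. By inclusion–exclusion, the bounded bridges
are all bridges, minus those visiting `l` and those visiting `u`, plus those visiting both.
Since `K ≤ 2 (u - l)`, no path visits `u`, `l`, `u` or `l`, `u`, `l` in this order, so a path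
visiting both levels either visits `u` and later `l`, or `l` and later `u`, and not both.

Reflecting a path in a level `c` after its first visit to `c` is a bijection between paths
visiting `c` that end at `e` and paths visiting `c` that end at `2c - e`; when `c` lies between
the start and `2c - e`, the latter are all paths ending there. This gives `C(K, B_l)` and
`C(K, B_u)`. Reflecting in `u` and then in `2u - l` identifies the paths visiting `u` and later
`l` with all paths ending at `j + 2 (u - l)`, counted by `C(K, B + (u - l))`; mirroring in the
level `i` reduces the other order to this one and gives `C(K, D + (u - l)) = c_{lu}`.
-/

open Finset
open scoped symmDiff

namespace LatticePath

open scoped Classical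

def SkipFree (f : ℕ → ℤ) : Prop := ∀ m, |f (m + 1) - f m| ≤ 1

namespace SkipFree

variable {f : ℕ → ℤ}

lemma neg (hf : SkipFree f) : SkipFree (-f) := fun m => by
  simpa only [Pi.neg_apply, neg_sub_neg, abs_sub_comm] using hf m

lemma abs_sub_le (hf : SkipFree f) {s t : ℕ} (hst : s ≤ t) : |f t - f s| ≤ t - s := by
  induction t, hst using Nat.le_induction with
  | base => simp
  | succ t _ ih =>
    calc |f (t + 1) - f s| ≤ |f (t + 1) - f t| + |f t - f s| := _root_.abs_sub_le _ _ _
      _ ≤ 1 + (t - s) := add_le_add (hf t) ih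
      _ = ((t + 1 : ℕ) : ℤ) - s := by push_cast; ring

lemma exists_eq_of_le_of_le (hf : SkipFree f) {s t : ℕ} {c : ℤ} (hst : s ≤ t)
    (hs : f s ≤ c) (ht : c ≤ f t) : ∃ m ∈ Set.Icc s t, f m = c := by
  induction t, hst using Nat.le_induction with
  | base => exact ⟨s, ⟨le_rfl, le_rfl⟩, le_antisymm hs ht⟩
  | succ t hst ih =>
    by_cases hc : c ≤ f t
    · obtain ⟨m, ⟨hsm, hmt⟩, hm⟩ := ih hc
      exact ⟨m, ⟨hsm, hmt.trans t.le_succ⟩, hm⟩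
    · have := (abs_le.mp (hf t)).2
      exact ⟨t + 1, ⟨hst.trans t.le_succ, le_rfl⟩, by omega⟩

lemma exists_eq_of_mem_uIcc (hf : SkipFree f) {s t : ℕ} {c : ℤ} (hst : s ≤ t)
    (hc : c ∈ Set.uIcc (f s) (f t)) : ∃ m ∈ Set.Icc s t, f m = c := by
  rcases Set.mem_uIcc.mp hc with ⟨hs, ht⟩ | ⟨ht, hs⟩
  · exact hf.exists_eq_of_le_of_le hst hs ht
  · obtain ⟨m, hm, hmc⟩ := hf.neg.exists_eq_of_le_of_le (c := -c) hst (by simpa) (by simpa)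
    exact ⟨m, hm, by simpa using hmc⟩

end SkipFree

section Visits

variable (K : ℕ) (f g : ℕ → ℤ)

def Visits (c : ℤ) : Prop := ∃ m ≤ K, f m = c

def VisitsThen (c d : ℤ) : Prop := ∃ s t, s ≤ t ∧ t ≤ K ∧ f s = c ∧ f t = d

noncomputable def firstVisit (c : ℤ) : ℕ := sInf {m | m ≤ K ∧ f m = c}

variable {K f g} {c d : ℤ}

lemma firstVisit_spec (h : Visits K f c) : firstVisit K f c ≤ K ∧ f (firstVisit K f c) = c :=
  Nat.sInf_mem h

lemma firstVisit_le {m : ℕ} (hm : m ≤ K) (hc : f m = c) : firstVisit K f c ≤ m :=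
  Nat.sInf_le ⟨hm, hc⟩

lemma firstVisit_congr (h : Visits K f c)
    (hfg : ∀ m ≤ firstVisit K f c, g m = f m) : firstVisit K g c = firstVisit K f c := by
  obtain ⟨hK, hc⟩ := firstVisit_spec h
  have hg : firstVisit K g c ≤ firstVisit K f c := firstVisit_le hK (by rw [hfg _ le_rfl, hc])
  refine hg.antisymm (firstVisit_le (hg.trans hK) ?_)
  obtain ⟨-, hgc⟩ := firstVisit_spec (f := g) ⟨_, hK, by rw [hfg _ le_rfl, hc]⟩
  rwa [← hfg _ hg]

lemma visitsThen_iff (h : Visits K f c) :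
    VisitsThen K f c d ↔ ∃ t, firstVisit K f c ≤ t ∧ t ≤ K ∧ f t = d := by
  constructor
  · rintro ⟨s, t, hst, htK, hs, ht⟩
    exact ⟨t, (firstVisit_le (hst.trans htK) hs).trans hst, htK, ht⟩
  · rintro ⟨t, hτt, htK, ht⟩
    exact ⟨_, t, hτt, htK, (firstVisit_spec h).2, ht⟩

lemma VisitsThen.visits_left (h : VisitsThen K f c d) : Visits K f c :=
  let ⟨s, _, hst, htK, hs, _⟩ := h; ⟨s, hst.trans htK, hs⟩

lemma visitsThen_self_iff : VisitsThen K f c c ↔ Visits K f c :=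
  ⟨VisitsThen.visits_left, fun ⟨m, hm, hmc⟩ => ⟨m, m, le_rfl, hm, hmc, hmc⟩⟩

lemma visits_and_visits_iff :
    Visits K f c ∧ Visits K f d ↔ VisitsThen K f c d ∨ VisitsThen K f d c := by
  constructor
  · rintro ⟨⟨s, hs, hsc⟩, ⟨t, ht, htd⟩⟩
    rcases le_total s t with hst | hts
    · exact Or.inl ⟨s, t, hst, ht, hsc, htd⟩
    · exact Or.inr ⟨t, s, hts, hs, htd, hsc⟩
  · rintro (⟨s, t, hst, ht, hs, htd⟩ | ⟨s, t, hst, ht, hs, htc⟩)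
    · exact ⟨⟨s, hst.trans ht, hs⟩, ⟨t, ht, htd⟩⟩
    · exact ⟨⟨t, ht, htc⟩, ⟨s, hst.trans ht, hs⟩⟩

end Visits

namespace SkipFree

variable {K : ℕ} {f : ℕ → ℤ} {c d l u : ℤ}

lemma visits_of_mem_uIcc (hf : SkipFree f) (hc : c ∈ Set.uIcc (f 0) (f K)) : Visits K f c := by
  obtain ⟨m, hm, hmc⟩ := hf.exists_eq_of_mem_uIcc K.zero_le hc
  exact ⟨m, hm.2, hmc⟩

lemma visitsThen_iff_visits (hf : SkipFree f) (hc : c ∈ Set.uIcc (f 0) d) :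
    VisitsThen K f c d ↔ Visits K f d := by
  refine ⟨fun ⟨_, t, _, ht, _, htd⟩ => ⟨t, ht, htd⟩, fun ⟨t, ht, htd⟩ => ?_⟩
  obtain ⟨s, hs, hsc⟩ := hf.exists_eq_of_mem_uIcc t.zero_le (htd ▸ hc)
  exact ⟨s, t, hs.2, ht, hsc, htd⟩

lemma forall_mem_Ioo_iff (hf : SkipFree f) (h0 : f 0 ∈ Set.Ioo l u) :
    (∀ m ≤ K, f m ∈ Set.Ioo l u) ↔ ¬Visits K f l ∧ ¬Visits K f u := by
  refine ⟨fun h => ⟨fun ⟨m, hm, hml⟩ => (h m hm).1.ne' hml,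
    fun ⟨m, hm, hmu⟩ => (h m hm).2.ne hmu⟩, fun ⟨hl, hu⟩ m hm => ?_⟩
  have hvisits (c) (hc : c ∈ Set.uIcc (f 0) (f m)) : Visits K f c := by
    obtain ⟨m', hm', hc'⟩ := hf.exists_eq_of_mem_uIcc m.zero_le hc
    exact ⟨m', hm'.2.trans hm, hc'⟩
  by_contra h
  rw [Set.mem_Ioo, not_and_or, not_lt, not_lt] at h
  rcases h with h | h
  · exact hl (hvisits l (Set.mem_uIcc.mpr (Or.inr ⟨h, h0.1.le⟩)))
  · exact hu (hvisits u (Set.mem_uIcc.mpr (Or.inl ⟨h0.2.le, h⟩)))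

lemma not_visitsThen_and_visitsThen (hf : SkipFree f) (h0 : f 0 ∈ Set.Ioo l u)
    (hK : (K : ℤ) ≤ 2 * (u - l)) : ¬(VisitsThen K f u l ∧ VisitsThen K f l u) := by
  rintro ⟨⟨s₁, t₁, hst₁, ht₁, hs₁, ht₁'⟩, ⟨s₂, t₂, hst₂, ht₂, hs₂, ht₂'⟩⟩
  have dist {s t : ℕ} (h : s ≤ t) := abs_le.mp (hf.abs_sub_le h)
  obtain ⟨hl, hu⟩ := h0
  -- Three alternating visits to `u` and `l` would take more than `2 * (u - l)` steps.
  rcases le_total t₁ t₂ with h | h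
  · have := dist s₁.zero_le; have := dist hst₁; have := dist h
    omega
  · have := dist s₂.zero_le; have := dist hst₂; have := dist h
    omega

end SkipFree

section Height

variable (i : ℤ) (S : Finset ℕ)

/-- The lattice path from `i` whose up-steps are the steps `k ∈ S`; step `k` leads from time `k`
to time `k + 1`. -/
def height (m : ℕ) : ℤ := i + 2 * #(S ∩ range m) - m

variable {i S} {K m : ℕ}

@[simp] lemma height_zero : height i S 0 = i := by simp [height]

lemma height_succ : height i S (m + 1) = height i S m + if m ∈ S then 1 else -1 := by
  unfold height
  split_ifs with hm
  · rw [range_add_one, inter_insert_of_mem hm,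
      card_insert_of_notMem fun h => by simpa using (mem_inter.mp h).2]
    push_cast; ring
  · rw [range_add_one, inter_insert_of_notMem hm]
    push_cast; ring

lemma abs_height_succ_sub : |height i S (m + 1) - height i S m| = 1 := by
  rw [height_succ]; split_ifs <;> simp

lemma skipFree_height : SkipFree (height i S) := fun _ => abs_height_succ_sub.le

lemma mem_iff_height_succ : m ∈ S ↔ height i S (m + 1) = height i S m + 1 := by
  rw [height_succ]; split_ifs <;> simp [*]

lemma height_of_subset_range (hS : S ⊆ range K) : height i S K = i + 2 * #S - K := by
  rw [height, inter_eq_left.mpr hS]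

lemma height_symmDiff_Ico_of_le {τ : ℕ} (hm : m ≤ τ) :
    height i (S ∆ Ico τ K) m = height i S m := by
  have : S ∆ Ico τ K ∩ range m = S ∩ range m := by
    ext k
    by_cases hk : k < m
    · simp [mem_symmDiff, hk, show ¬τ ≤ k by omega]
    · simp [hk]
  rw [height, height, this]

lemma height_symmDiff_Ico_of_ge {τ : ℕ} (hτm : τ ≤ m) (hmK : m ≤ K) :
    height i (S ∆ Ico τ K) m = 2 * height i S τ - height i S m := by
  induction m, hτm using Nat.le_induction with
  | base => rw [height_symmDiff_Ico_of_le le_rfl]; ring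
  | succ m hτm ih =>
    have hflip : m ∈ S ∆ Ico τ K ↔ m ∉ S := by
      simp [mem_symmDiff, show m ∈ Ico τ K from mem_Ico.mpr ⟨hτm, by omega⟩]
    rw [height_succ, height_succ, ih (by omega)]
    by_cases hm : m ∈ S
    · rw [if_pos hm, if_neg (by rwa [hflip, not_not])]; ring
    · rw [if_neg hm, if_pos (hflip.mpr hm)]; ring

end Height

section Reflection

variable {K : ℕ} {i c d : ℤ} {S : Finset ℕ} {m : ℕ}

variable (K i c) in
/-- The path `height i S` reflected in the level `c` from its first visit to `c` on. -/
noncomputable def reflect (S : Finset ℕ) : Finset ℕ := S ∆ Ico (firstVisit K (height i S) c) K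

lemma height_reflect_of_le (hm : m ≤ firstVisit K (height i S) c) :
    height i (reflect K i c S) m = height i S m :=
  height_symmDiff_Ico_of_le hm

lemma height_reflect_of_ge (hS : Visits K (height i S) c) (hm : firstVisit K (height i S) c ≤ m)
    (hmK : m ≤ K) : height i (reflect K i c S) m = 2 * c - height i S m := by
  rw [reflect, height_symmDiff_Ico_of_ge hm hmK, (firstVisit_spec hS).2]

lemma firstVisit_reflect (hS : Visits K (height i S) c) :
    firstVisit K (height i (reflect K i c S)) c = firstVisit K (height i S) c :=
  firstVisit_congr hS fun _ => height_reflect_of_le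

lemma visits_reflect (hS : Visits K (height i S) c) :
    Visits K (height i (reflect K i c S)) c := by
  obtain ⟨hK, hc⟩ := firstVisit_spec hS
  exact ⟨_, hK, by rw [height_reflect_of_le le_rfl, hc]⟩

lemma reflect_reflect (hS : Visits K (height i S) c) : reflect K i c (reflect K i c S) = S := by
  rw [reflect, firstVisit_reflect hS, reflect, symmDiff_symmDiff_cancel_right]

lemma reflect_subset_range (hS : S ⊆ range K) : reflect K i c S ⊆ range K :=
  symmDiff_subset_union.trans (union_subset hS fun k hk => by simp_all)

lemma endpoint_reflect (hS : Visits K (height i S) c) (hSK : S ⊆ range K) :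
    i + 2 * #(reflect K i c S) - K = 2 * c - (i + 2 * #S - K) := by
  rw [← height_of_subset_range hSK, ← height_of_subset_range (reflect_subset_range hSK),
    height_reflect_of_ge hS (firstVisit_spec hS).1 le_rfl]

lemma visitsThen_reflect_iff (hS : Visits K (height i S) c) :
    VisitsThen K (height i (reflect K i c S)) c (2 * c - d) ↔ VisitsThen K (height i S) c d := by
  rw [visitsThen_iff (visits_reflect hS), visitsThen_iff hS, firstVisit_reflect hS]
  refine exists_congr fun t => and_congr_right fun ht => and_congr_right fun htK => ?_
  rw [height_reflect_of_ge hS ht htK]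
  omega

end Reflection

section Counting

variable {K : ℕ} {i c d : ℤ}

lemma reflect_mem_filter_visitsThen {n n' : ℕ} {S : Finset ℕ}
    (hn : (i + 2 * n - K) + (i + 2 * n' - K) = 2 * c)
    (hS : S ∈ {S ∈ powersetCard n (range K) | VisitsThen K (height i S) c d}) :
    reflect K i c S ∈
      {S ∈ powersetCard n' (range K) | VisitsThen K (height i S) c (2 * c - d)} := by
  simp only [mem_filter, mem_powersetCard] at hS ⊢
  obtain ⟨⟨hSK, hcard⟩, hvis⟩ := hS
  have hc := hvis.visits_left
  refine ⟨⟨reflect_subset_range hSK, ?_⟩, (visitsThen_reflect_iff hc).mpr hvis⟩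
  have := endpoint_reflect hc hSK
  omega

/-- The reflection principle. -/
lemma card_filter_visitsThen_eq {n n' : ℕ} (hn : (i + 2 * n - K) + (i + 2 * n' - K) = 2 * c) :
    #{S ∈ powersetCard n (range K) | VisitsThen K (height i S) c d}
      = #{S ∈ powersetCard n' (range K) | VisitsThen K (height i S) c (2 * c - d)} := by
  refine card_bij' (fun S _ => reflect K i c S) (fun S _ => reflect K i c S)
    (fun S hS => reflect_mem_filter_visitsThen hn hS)
    (fun S hS => by
      simpa using reflect_mem_filter_visitsThen (n := n') (n' := n) (by linarith) hS)
    (fun S hS => reflect_reflect (mem_filter.mp hS).2.visits_left)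
    (fun S hS => reflect_reflect (mem_filter.mp hS).2.visits_left)

lemma card_filter_visits_eq_choose {n n' : ℕ} (hn : (i + 2 * n - K) + (i + 2 * n' - K) = 2 * c)
    (hc : c ∈ Set.uIcc i (i + 2 * n' - K)) :
    #{S ∈ powersetCard n (range K) | Visits K (height i S) c} = K.choose n' := by
  have hreflect := card_filter_visitsThen_eq (d := c) hn
  rw [two_mul, add_sub_cancel_right] at hreflect
  simp only [visitsThen_self_iff] at hreflect
  rw [hreflect, filter_true_of_mem, card_powersetCard, card_range]
  intro S hS
  obtain ⟨hSK, hcard⟩ := mem_powersetCard.mp hS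
  refine skipFree_height.visits_of_mem_uIcc ?_
  rwa [height_zero, height_of_subset_range hSK, hcard]

lemma card_filter_visitsThen_down {n n₂ : ℕ} {l u : ℤ} (hli : l < i) (hiu : i < u)
    (hnK : n ≤ K) (hl : l ≤ i + 2 * n - K) (hn₂ : (n₂ : ℤ) = n + (u - l)) :
    #{S ∈ powersetCard n (range K) | VisitsThen K (height i S) u l} = K.choose n₂ := by
  obtain ⟨n₁, hn₁⟩ : ∃ n₁ : ℕ, (n₁ : ℤ) = K - n + (u - i) :=
    ⟨(K - n + (u - i)).toNat, by omega⟩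
  -- Reflect in `u` after the first visit to `u`, and then in `2u - l` after the first visit there.
  calc #{S ∈ powersetCard n (range K) | VisitsThen K (height i S) u l}
      = #{S ∈ powersetCard n₁ (range K) | VisitsThen K (height i S) u (2 * u - l)} :=
        card_filter_visitsThen_eq (by omega)
    _ = #{S ∈ powersetCard n₁ (range K) | Visits K (height i S) (2 * u - l)} := by
        refine congrArg card (filter_congr fun S _ => skipFree_height.visitsThen_iff_visits ?_)
        rw [height_zero, Set.mem_uIcc]
        omega
    _ = K.choose n₂ := card_filter_visits_eq_choose (by omega) (by rw [Set.mem_uIcc]; omega)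

lemma mirror_mem_filter_visitsThen {n : ℕ} {S : Finset ℕ} (hnK : n ≤ K)
    (hS : S ∈ {S ∈ powersetCard n (range K) | VisitsThen K (height i S) c d}) :
    S ∆ range K ∈ {S ∈ powersetCard (K - n) (range K) |
      VisitsThen K (height i S) (2 * i - c) (2 * i - d)} := by
  simp only [mem_filter, mem_powersetCard] at hS ⊢
  obtain ⟨⟨hSK, hcard⟩, s, t, hst, htK, hs, ht⟩ := hS
  have hmirror {m : ℕ} (hm : m ≤ K) : height i (S ∆ range K) m = 2 * i - height i S m := by
    rw [range_eq_Ico, height_symmDiff_Ico_of_ge m.zero_le hm, height_zero]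
  have hsub : S ∆ range K ⊆ range K := symmDiff_subset_union.trans (union_subset hSK subset_rfl)
  refine ⟨⟨hsub, ?_⟩, s, t, hst, htK, by rw [hmirror (hst.trans htK), hs],
    by rw [hmirror htK, ht]⟩
  have := hmirror le_rfl
  rw [height_of_subset_range hsub, height_of_subset_range hSK] at this
  omega

lemma card_filter_visitsThen_mirror {n : ℕ} (hnK : n ≤ K) :
    #{S ∈ powersetCard n (range K) | VisitsThen K (height i S) c d}
      = #{S ∈ powersetCard (K - n) (range K) |
          VisitsThen K (height i S) (2 * i - c) (2 * i - d)} :=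
  card_bij' (fun S _ => S ∆ range K) (fun S _ => S ∆ range K)
    (fun S hS => mirror_mem_filter_visitsThen hnK hS)
    (fun S hS => by
      simpa [Nat.sub_sub_self hnK] using mirror_mem_filter_visitsThen (K.sub_le n) hS)
    (fun S _ => symmDiff_symmDiff_cancel_right _ _)
    (fun S _ => symmDiff_symmDiff_cancel_right _ _)

lemma card_filter_visitsThen_up {n n₂ : ℕ} {l u : ℤ} (hli : l < i) (hiu : i < u)
    (hnK : n ≤ K) (hu : i + 2 * n - K ≤ u) (hn₂ : (n₂ : ℤ) = K - n + (u - l)) :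
    #{S ∈ powersetCard n (range K) | VisitsThen K (height i S) l u} = K.choose n₂ := by
  rw [card_filter_visitsThen_mirror hnK]
  exact card_filter_visitsThen_down (by omega) (by omega) (K.sub_le n) (by omega) (by omega)

lemma card_filter_not_visits_and_not_visits {n : ℕ} {l u : ℤ} (hli : l < i) (hiu : i < u)
    (hK : (K : ℤ) ≤ 2 * (u - l)) :
    (#{S ∈ powersetCard n (range K) | ¬Visits K (height i S) l ∧ ¬Visits K (height i S) u} : ℤ)
      = K.choose n
        - #{S ∈ powersetCard n (range K) | Visits K (height i S) l}
        - #{S ∈ powersetCard n (range K) | Visits K (height i S) u}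
        + #{S ∈ powersetCard n (range K) | VisitsThen K (height i S) u l}
        + #{S ∈ powersetCard n (range K) | VisitsThen K (height i S) l u} := by
  set P := powersetCard n (range K)
  have hcompl := card_filter_add_card_filter_not
    (s := P) (fun S => Visits K (height i S) l ∨ Visits K (height i S) u)
  have hunion := card_union_add_card_inter
    {S ∈ P | Visits K (height i S) l} {S ∈ P | Visits K (height i S) u}
  have hboth : {S ∈ P | Visits K (height i S) l ∧ Visits K (height i S) u}
      = {S ∈ P | VisitsThen K (height i S) u l} ∪ {S ∈ P | VisitsThen K (height i S) l u} := by
    rw [← filter_or]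
    exact filter_congr fun S _ => visits_and_visits_iff.trans or_comm
  have hdisj : Disjoint {S ∈ P | VisitsThen K (height i S) u l}
      {S ∈ P | VisitsThen K (height i S) l u} :=
    disjoint_filter.mpr fun S _ hul hlu => skipFree_height.not_visitsThen_and_visitsThen
      (by rw [height_zero]; exact ⟨hli, hiu⟩) hK ⟨hul, hlu⟩
  rw [← filter_or, ← filter_and, hboth, card_union_of_disjoint hdisj] at hunion
  simp only [not_or] at hcompl
  rw [card_powersetCard, card_range] at hcompl
  omega

end Counting

section Bridges

variable {K : ℕ} {i : ℤ} {ω : Fin (K + 1) → ℤ}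

variable (ω) in
def upSteps : Finset ℕ :=
  (univ.filter fun k : Fin K => ω k.succ = ω k.castSucc + 1).map Fin.valEmbedding

lemma upSteps_subset_range : upSteps ω ⊆ range K := by
  intro m hm
  obtain ⟨k, -, rfl⟩ := mem_map.mp hm
  exact mem_range.mpr k.isLt

lemma mem_upSteps (k : Fin K) : (k : ℕ) ∈ upSteps ω ↔ ω k.succ = ω k.castSucc + 1 := by
  rw [upSteps, ← Fin.valEmbedding_apply, mem_map', mem_filter, and_iff_right (mem_univ k)]

lemma height_upSteps (h0 : ω 0 = i) (hstep : ∀ k : Fin K, |ω k.succ - ω k.castSucc| = 1)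
    (k : Fin (K + 1)) : height i (upSteps ω) k = ω k := by
  induction k using Fin.induction with
  | zero => rw [Fin.val_zero, height_zero, h0]
  | succ k ih =>
    rw [Fin.val_succ, height_succ, ← Fin.val_castSucc, ih]
    split_ifs with hk
    · exact ((mem_upSteps k).mp hk).symm
    · have := (mem_upSteps k).not.mp hk
      have := abs_eq (zero_le_one' ℤ) |>.mp (hstep k)
      omega

lemma upSteps_height {S : Finset ℕ} (hS : S ⊆ range K) :
    upSteps (fun k : Fin (K + 1) => height i S k) = S := by
  ext m
  constructor
  · intro hm
    obtain ⟨k, -, rfl⟩ := mem_map.mp hm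
    exact mem_iff_height_succ.mpr (by simpa using (mem_upSteps k).mp hm)
  · intro hm
    have hk : m < K := mem_range.mp (hS hm)
    simpa using (mem_upSteps (ω := fun k : Fin (K + 1) => height i S k) ⟨m, hk⟩).mpr
      (mem_iff_height_succ.mp hm)

lemma boundedBridges_eq_image {j l u : ℤ} {B D : ℕ} (hj : j = i + B - D)
    (hi : i ∈ Set.Ioo l u) :
    BoundedBridges i j l u B D = (fun S (k : Fin (B + D + 1)) => height i S k) ''
      {S ∈ powersetCard B (range (B + D)) |
        ¬Visits (B + D) (height i S) l ∧ ¬Visits (B + D) (height i S) u} := by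
  have hbounded {S : Finset ℕ} :=
    (skipFree_height (i := i) (S := S)).forall_mem_Ioo_iff (K := B + D) (by rwa [height_zero])
  ext ω
  simp only [BoundedBridges, Set.mem_ofPred_eq, Set.mem_image, mem_powersetCard]
  constructor
  · rintro ⟨⟨h0, -, hstep, hcount⟩, hω⟩
    have hheight := height_upSteps h0 hstep
    refine ⟨upSteps ω, ⟨⟨upSteps_subset_range, by rw [upSteps, card_map, hcount]⟩, ?_⟩,
      funext hheight⟩
    refine hbounded.mp fun m hm => ?_
    simpa [hheight ⟨m, Nat.lt_succ_of_le hm⟩] using hω ⟨m, Nat.lt_succ_of_le hm⟩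
  · rintro ⟨S, ⟨⟨hSK, hcard⟩, hvis⟩, rfl⟩
    refine ⟨⟨by simp, ?_, fun k => ?_, ?_⟩, fun k => hbounded.mpr hvis k k.is_le⟩
    · dsimp only
      rw [Fin.val_last, height_of_subset_range hSK, hcard, hj]
      push_cast; ring
    · dsimp only
      rw [Fin.val_succ, Fin.val_castSucc, abs_height_succ_sub]
    · rw [← card_map Fin.valEmbedding]
      exact (congrArg card (upSteps_height hSK)).trans hcard

lemma injOn_height : Set.InjOn (fun S (k : Fin (K + 1)) => height i S k) {S | S ⊆ range K} :=
  fun S hS T hT hST => by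
    rw [← upSteps_height hS, ← upSteps_height hT]
    exact congrArg upSteps hST

lemma ncard_boundedBridges {j l u : ℤ} {B D : ℕ} (hj : j = i + B - D)
    (hi : i ∈ Set.Ioo l u) :
    (BoundedBridges i j l u B D).ncard = #{S ∈ powersetCard B (range (B + D)) |
      ¬Visits (B + D) (height i S) l ∧ ¬Visits (B + D) (height i S) u} := by
  rw [boundedBridges_eq_image hj hi, ← coe_filter, (injOn_height.mono _).ncard_image,
    Set.ncard_coe_finset]
  exact fun S hS => (mem_powersetCard.mp (mem_filter.mp hS).1).1

end Bridges

end LatticePath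

open LatticePath

theorem bounded_bridge_count_case4_general (i j l u : ℤ) (B D : ℕ)
    (hj : j = i + B - D) (hli : l < i) (hiu : i < u) (hlj : l < j) (hju : j < u)
    (hlr : i - D ≤ l) (hK : ((B + D : ℕ) : ℤ) ≤ 2 * (u - l)) :
    ((BoundedBridges i j l u B D).ncard : ℤ)
      = (Nat.choose (B + D) B : ℤ)
        - (Nat.choose (B + D) (((B : ℤ) + l - j).toNat) : ℤ)
        - (Nat.choose (B + D) (((B : ℤ) - j + u).toNat) : ℤ)
        + (if u - l ≤ (B : ℤ) then
            (Nat.choose (B + D) (B - (u - l).toNat) : ℤ) else 0)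
        + (Nat.choose (B + D) (B + (u - l).toNat) : ℤ) := by
  have hite : (if u - l ≤ (B : ℤ) then (Nat.choose (B + D) (B - (u - l).toNat) : ℤ) else 0)
      = Nat.choose (B + D) (D + (u - l).toNat) := by
    split_ifs with h
    · rw [Nat.choose_symm_of_eq_add
        (show B + D = (B - (u - l).toNat) + (D + (u - l).toNat) by omega)]
    · rw [Nat.choose_eq_zero_of_lt (by omega), Nat.cast_zero]
  rw [ncard_boundedBridges hj ⟨hli, hiu⟩,
    card_filter_not_visits_and_not_visits hli hiu hK,
    card_filter_visits_eq_choose (n' := ((B : ℤ) + l - j).toNat) (by omega)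
      (by rw [Set.mem_uIcc]; omega),
    card_filter_visits_eq_choose (n' := ((B : ℤ) - j + u).toNat) (by omega)
      (by rw [Set.mem_uIcc]; omega),
    card_filter_visitsThen_down hli hiu (n₂ := B + (u - l).toNat) (by omega) (by omega)
      (by omega),
    card_filter_visitsThen_up hli hiu (n₂ := D + (u - l).toNat) (by omega) (by omega) (by omega),
    hite, add_right_comm]

/-- Theorem 1, case 4 (exact form): with `l < i < u`, `l < j < u`, both bounds
reachable (`u ≤ i + B`, `l ≥ i - D`) and `K ≤ 2(u - l)`, as an identity of
integers, `card 𝕊_{ij}^B(l,u) = C(K,B) - C(K,B_l) - C(K,B_u) + c_{lu} + c_{ul}`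
where `B_l = B + l - j`, `B_u = B - j + u`, `c_{lu} = C(K, B - (u - l))` if
`B ≥ u - l` (else `0`), and `c_{ul} = C(K, B + (u - l))`. -/
theorem bounded_bridge_count_case4 (i j l u : ℤ) (B D : ℕ)
    (hj : j = i + B - D) (hli : l < i) (hiu : i < u) (hlj : l < j) (hju : j < u)
    (hur : u ≤ i + B) (hlr : i - D ≤ l) (hK : ((B + D : ℕ) : ℤ) ≤ 2 * (u - l)) :
    ((BoundedBridges i j l u B D).ncard : ℤ)
      = (Nat.choose (B + D) B : ℤ)
        - (Nat.choose (B + D) (((B : ℤ) + l - j).toNat) : ℤ)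
        - (Nat.choose (B + D) (((B : ℤ) - j + u).toNat) : ℤ)
        + (if u - l ≤ (B : ℤ) then
            (Nat.choose (B + D) (B - (u - l).toNat) : ℤ) else 0)
        + (Nat.choose (B + D) (B + (u - l).toNat) : ℤ) :=
  bounded_bridge_count_case4_general i j l u B D hj hli hiu hlj hju hlr hK
end
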